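/- Let N ≥ 1, Δt > 0, and let a, b ∈ ℂ^N satisfy the modified midpoint mass-preserving scheme with periodic boundary conditions, i.e. with the index conventions a_0 = a_N, a_{N+1} = a_1, b_0 = b_N, b_{N+1} = b_1: for each j = 1,…,N, b_j = a_j + Δt·( −i·((|a_j|² + |b_j|²)/2)·m_j + 2i \bar{m_j}( m_{j+1}² + m_{j−1}² ) ), where m_j = (a_j + b_j)/2. Then Σ_{j=1}^N |b_j|² = Σ_{j=1}^N |a_j|². -/
import Mathlib


private lemma conj_mul_im_swap (z w : ℂ) :
    ((starRingEnd ℂ) z * w).im = -(((starRingEnd ℂ) w) * z).im := by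
  simp [Complex.mul_im]
  ring

private lemma normSq_sub_eq (x y : ℂ) :
    Complex.normSq y - Complex.normSq x = ((x + y) * (starRingEnd ℂ) (y - x)).re := by
  simp [Complex.normSq_apply, Complex.mul_re]
  ring

/-- The modified midpoint (mass-preserving) scheme for the toy
model system with periodic boundary conditions (`a 0 = a N`, `a (N+1) = a 1`,
similarly for `b`) exactly conserves the mass. -/
theorem modified_midpoint_mass_conservation_periodic
    (N : ℕ) (hN : 1 ≤ N) (Δt : ℝ) (hΔt : 0 < Δt)
    (a b m : ℕ → ℂ)
    (ha0 : a 0 = a N) (haN : a (N + 1) = a 1)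
    (hb0 : b 0 = b N) (hbN : b (N + 1) = b 1)
    (hm : ∀ j, m j = (a j + b j) / 2)
    (hscheme : ∀ j ∈ Finset.Icc 1 N,
      b j = a j + (Δt : ℂ) *
        (-Complex.I * ((((Complex.normSq (a j) + Complex.normSq (b j)) / 2 : ℝ) : ℂ)) * m j
          + 2 * Complex.I * (starRingEnd ℂ) (m j) * ((m (j + 1)) ^ 2 + (m (j - 1)) ^ 2))) :
    ∑ j ∈ Finset.Icc 1 N, Complex.normSq (b j)
      = ∑ j ∈ Finset.Icc 1 N, Complex.normSq (a j) := by
  have hm0 : m 0 = m N := by rw [hm, hm, ha0, hb0]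
  have hmN : m (N + 1) = m 1 := by rw [hm, hm, haN, hbN]
  -- the per-site mass change
  have key : ∀ j ∈ Finset.Icc 1 N,
      Complex.normSq (b j) - Complex.normSq (a j)
        = -4 * Δt * (((starRingEnd ℂ) (m j)) ^ 2 * ((m (j + 1)) ^ 2 + (m (j - 1)) ^ 2)).im := by
    intro j hj
    have hbj := hscheme j hj
    have hd : b j - a j = (Δt : ℂ) *
        (-Complex.I * ((((Complex.normSq (a j) + Complex.normSq (b j)) / 2 : ℝ) : ℂ)) * m j
          + 2 * Complex.I * (starRingEnd ℂ) (m j) * ((m (j + 1)) ^ 2 + (m (j - 1)) ^ 2)) := by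
      linear_combination hbj
    have hsum : a j + b j = 2 * m j := by rw [hm]; ring
    rw [normSq_sub_eq (a j) (b j), hd, hsum]
    simp only [map_mul, map_add, map_neg, map_pow, map_div₀, map_ofNat,
      Complex.conj_conj, Complex.conj_ofReal, Complex.conj_I]
    simp [Complex.mul_re, Complex.mul_im, Complex.add_im, Complex.add_re, pow_two]
    ring
  -- the sum of imaginary parts vanishes by periodicity
  obtain ⟨n, rfl⟩ : ∃ n, N = n + 1 := ⟨N - 1, (Nat.succ_pred_eq_of_pos hN).symm⟩
  set F : ℕ → ℝ := fun i => (((starRingEnd ℂ) (m (i + 1))) ^ 2 * (m (i + 2)) ^ 2).im with hF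
  set G : ℕ → ℝ := fun i => (((starRingEnd ℂ) (m (i + 1))) ^ 2 * (m i) ^ 2).im with hG
  have hGF : ∀ i, G (i + 1) = -F i := by
    intro i
    simp only [hF, hG]
    rw [← map_pow, ← map_pow, conj_mul_im_swap]
  have hG0 : G 0 = -F n := by
    simp only [hF, hG]
    rw [← map_pow, ← map_pow, conj_mul_im_swap, hm0]
    rw [show n + 2 = (n + 1) + 1 from rfl, hmN]
  have hsum0 : ∑ j ∈ Finset.Icc 1 (n + 1),
      (((starRingEnd ℂ) (m j)) ^ 2 * ((m (j + 1)) ^ 2 + (m (j - 1)) ^ 2)).im = 0 := by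
    rw [← Finset.Ico_add_one_right_eq_Icc, Finset.sum_Ico_eq_sum_range]
    have hrange : n + 1 + 1 - 1 = n + 1 := by omega
    rw [hrange]
    have hterm : ∀ i, (((starRingEnd ℂ) (m (1 + i))) ^ 2
        * ((m (1 + i + 1)) ^ 2 + (m (1 + i - 1)) ^ 2)).im = F i + G i := by
      intro i
      have e1 : 1 + i - 1 = i := by omega
      have e2 : 1 + i + 1 = i + 2 := by omega
      have e3 : 1 + i = i + 1 := by omega
      rw [e1, e2, e3, mul_add, Complex.add_im]
    calc ∑ i ∈ Finset.range (n + 1), (((starRingEnd ℂ) (m (1 + i))) ^ 2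
            * ((m (1 + i + 1)) ^ 2 + (m (1 + i - 1)) ^ 2)).im
        = ∑ i ∈ Finset.range (n + 1), (F i + G i) := by
          exact Finset.sum_congr rfl fun i _ => hterm i
      _ = (∑ i ∈ Finset.range (n + 1), F i) + ∑ i ∈ Finset.range (n + 1), G i := by
          rw [Finset.sum_add_distrib]
      _ = ((∑ i ∈ Finset.range n, F i) + F n)
            + ((∑ i ∈ Finset.range n, G (i + 1)) + G 0) := by
          rw [Finset.sum_range_succ, Finset.sum_range_succ']
      _ = 0 := by
          have h1 : ∑ i ∈ Finset.range n, G (i + 1) = -∑ i ∈ Finset.range n, F i := by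
            rw [Finset.sum_congr rfl fun i _ => hGF i]
            simp
          rw [h1, hG0]
          ring
  have hdiff : ∑ j ∈ Finset.Icc 1 (n + 1),
      (Complex.normSq (b j) - Complex.normSq (a j)) = 0 := by
    calc ∑ j ∈ Finset.Icc 1 (n + 1), (Complex.normSq (b j) - Complex.normSq (a j))
        = ∑ j ∈ Finset.Icc 1 (n + 1), (-4 * Δt)
            * (((starRingEnd ℂ) (m j)) ^ 2 * ((m (j + 1)) ^ 2 + (m (j - 1)) ^ 2)).im := by
          refine Finset.sum_congr rfl fun j hj => ?_
          rw [key j hj]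
      _ = (-4 * Δt) * ∑ j ∈ Finset.Icc 1 (n + 1),
            (((starRingEnd ℂ) (m j)) ^ 2 * ((m (j + 1)) ^ 2 + (m (j - 1)) ^ 2)).im := by
          rw [Finset.mul_sum]
      _ = 0 := by rw [hsum0]; ring
  rw [Finset.sum_sub_distrib] at hdiff
  linarith
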